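/- Let Γ be a connected, locally finite graph equipped with a cobounded quasi-action of a group G, and suppose Γ has at least two ends. Then there exists a constant C ≥ 1 such that: for every finite vertex set Z ⊆ V(Γ) such that Γ with Z deleted is connected, every vertex z ∈ Z lies within distance C (in Γ) of some vertex of Z that has a neighbour outside Z. -/

import Mathlib

open SimpleGraph

namespace Paper

variable {V W : Type*}

/-- Locally finite graph: every vertex has finite degree. -/
def LocFin (G : SimpleGraph V) : Prop := ∀ v : V, (G.neighborSet v).Finite

/-- All vertex degrees are at most `d`. -/
def DegLe (G : SimpleGraph V) (d : ℕ) : Prop :=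
  ∀ v : V, (G.neighborSet v).Finite ∧ (G.neighborSet v).ncard ≤ d

/-- Bounded valence. -/
def BddVal (G : SimpleGraph V) : Prop := ∃ d : ℕ, DegLe G d

/-- `(l, e)`-quasi-isometric embedding between the vertex sets of two graphs. -/
def IsQIE (G : SimpleGraph V) (H : SimpleGraph W) (l e : ℝ) (f : V → W) : Prop :=
  ∀ x y : V,
    (G.dist x y : ℝ) / l - e ≤ (H.dist (f x) (f y) : ℝ) ∧
      (H.dist (f x) (f y) : ℝ) ≤ l * (G.dist x y : ℝ) + e

/-- Coarse surjectivity: every vertex of the target lies within distance `e` of the image. -/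
def CoarseSurj (H : SimpleGraph W) (e : ℝ) (f : V → W) : Prop :=
  ∀ w : W, ∃ x : V, (H.dist w (f x) : ℝ) ≤ e

/-- `(l, e)`-quasi-isometry. -/
def IsQI (G : SimpleGraph V) (H : SimpleGraph W) (l e : ℝ) (f : V → W) : Prop :=
  IsQIE G H l e f ∧ CoarseSurj H e f

/-- `g` is an `h`-quasi-inverse of `f`. -/
def IsQInv (G : SimpleGraph V) (h : ℝ) (f : V → W) (g : W → V) : Prop :=
  ∀ x : V, (G.dist (g (f x)) x : ℝ) ≤ h

/-- Reachability by a walk all of whose vertices avoid the set `S`. -/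
def ReachOut (G : SimpleGraph V) (S : Set V) (a b : V) : Prop :=
  ∃ w : G.Walk a b, ∀ v ∈ w.support, v ∉ S

/-- A one-way infinite simple ray. -/
def RayIn (G : SimpleGraph V) (r : ℕ → V) : Prop :=
  Function.Injective r ∧ ∀ n : ℕ, G.Adj (r n) (r (n + 1))

/-- End-equivalence of rays: for every finite vertex set they have tails in the same
connected component of the graph with that set deleted. -/
def EndEquiv (G : SimpleGraph V) (r₁ r₂ : ℕ → V) : Prop :=
  ∀ S : Set V, S.Finite → ∃ N : ℕ, ∀ m n : ℕ, N ≤ m → N ≤ n → ReachOut G S (r₁ m) (r₂ n)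

/-- Two points (encoded as sequences: a constant sequence for a vertex, a ray for an end)
lie in distinct connected components of `G` with the vertex set `S` deleted. -/
def SepComps (G : SimpleGraph V) (S : Set V) (a b : ℕ → V) : Prop :=
  ∃ N : ℕ,
    (∀ m n : ℕ, N ≤ m → N ≤ n → ReachOut G S (a m) (a n)) ∧
    (∀ m n : ℕ, N ≤ m → N ≤ n → ReachOut G S (b m) (b n)) ∧
    (∀ m n : ℕ, N ≤ m → N ≤ n → ¬ ReachOut G S (a m) (b n))

/-- `vs(G) ≥ N`: any vertex set separating two ends has at least `N` elements. -/
def VsGe (G : SimpleGraph V) (N : ℕ) : Prop :=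
  ∀ r₁ r₂ : ℕ → V, RayIn G r₁ → RayIn G r₂ →
    ∀ S : Set V, S.Finite → SepComps G S r₁ r₂ → N ≤ S.ncard

/-- `vs(G) ≥ c` for a real threshold `c`. -/
def VsGeR (G : SimpleGraph V) (c : ℝ) : Prop :=
  ∀ r₁ r₂ : ℕ → V, RayIn G r₁ → RayIn G r₂ →
    ∀ S : Set V, S.Finite → SepComps G S r₁ r₂ → c ≤ (S.ncard : ℝ)

/-- `U` is a connected component of `G` with the vertex set `A` deleted. -/
def IsCompOut (G : SimpleGraph V) (A U : Set V) : Prop :=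
  ∃ a ∈ U, ∀ b : V, ReachOut G A a b ↔ b ∈ U

/-- The edge coboundary `δb` of a vertex set `b`. -/
def cob (G : SimpleGraph V) (b : Set V) : Set (Sym2 V) :=
  {e | ∃ x y : V, e = s(x, y) ∧ G.Adj x y ∧ x ∈ b ∧ y ∉ b}

/-- Membership in the Boolean ring `𝓑G` of vertex sets with finite coboundary. -/
def MemBX (G : SimpleGraph V) (b : Set V) : Prop := (cob G b).Finite

/-- The set of endpoints of the edges of `δb`. -/
def cobVerts (G : SimpleGraph V) (b : Set V) : Set V :=
  {v | ∃ w : V, s(v, w) ∈ cob G b}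

/-- A tight element: both sides induce connected subgraphs. -/
def Tight (G : SimpleGraph V) (b : Set V) : Prop :=
  (G.induce b).Connected ∧ (G.induce bᶜ).Connected

/-- Vertices of `A` that are endpoints of an edge with the other endpoint in `U`. -/
def AttachSet (G : SimpleGraph V) (A U : Set V) : Set V :=
  {v | v ∈ A ∧ ∃ u ∈ U, G.Adj v u}

/-- `incut(A) ≤ k` for a vertex set `A`, with the intrinsic metric of `G.induce A`. -/
def IncutBddSet (G : SimpleGraph V) (A : Set V) (k : ℕ) : Prop :=
  ∀ U : Set V, IsCompOut G A U →
    ∀ v w : A, (v : V) ∈ AttachSet G A U → (w : V) ∈ AttachSet G A U →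
      (G.induce A).dist v w ≤ k

/-- `outcut(A) ≤ k` for a vertex set `A`. -/
def OutcutBddSet (G : SimpleGraph V) (A : Set V) (k : ℕ) : Prop :=
  ∀ U : Set V, IsCompOut G A U → IncutBddSet G U k

/-- Uniform coboundary for a vertex set. -/
def UnifCobSet (G : SimpleGraph V) (A : Set V) : Prop :=
  (∃ k : ℕ, IncutBddSet G A k) ∧ (∃ k : ℕ, OutcutBddSet G A k)

/-- `incut(L) ≤ k` for a subgraph `L`, with its own intrinsic metric. -/
def IncutBddSub (G : SimpleGraph V) (L : G.Subgraph) (k : ℕ) : Prop :=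
  ∀ U : Set V, IsCompOut G L.verts U →
    ∀ v w : L.verts, (v : V) ∈ AttachSet G L.verts U → (w : V) ∈ AttachSet G L.verts U →
      L.coe.dist v w ≤ k

/-- `outcut(L) ≤ k` for a subgraph `L`. -/
def OutcutBddSub (G : SimpleGraph V) (L : G.Subgraph) (k : ℕ) : Prop :=
  ∀ U : Set V, IsCompOut G L.verts U → IncutBddSet G U k

/-- Uniform coboundary for a subgraph. -/
def UnifCobSub (G : SimpleGraph V) (L : G.Subgraph) : Prop :=
  (∃ k : ℕ, IncutBddSub G L k) ∧ (∃ k : ℕ, OutcutBddSub G L k)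

/-- Quasi-transitive graph: the automorphism group has finitely many orbits of vertices. -/
def QuasiTransitive (G : SimpleGraph V) : Prop :=
  ∃ F : Set V, F.Finite ∧ ∀ v : V, ∃ e : G ≃g G, ∃ w ∈ F, e w = v

/-- Hausdorff distance between two vertex sets is at most `r`. -/
def HausBdd (G : SimpleGraph V) (A B : Set V) (r : ℝ) : Prop :=
  (∀ a ∈ A, ∃ b ∈ B, (G.dist a b : ℝ) ≤ r) ∧ (∀ b ∈ B, ∃ a ∈ A, (G.dist a b : ℝ) ≤ r)

/-- Reachability by a walk avoiding the edge set `F`. -/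
def ReachAvoidE (G : SimpleGraph V) (F : Set (Sym2 V)) (a b : V) : Prop :=
  ∃ w : G.Walk a b, ∀ e ∈ w.edges, e ∉ F

/-- The ends of the rays `r₁`, `r₂` are separated by deleting the edge set `F`. -/
def SepEnds (G : SimpleGraph V) (F : Set (Sym2 V)) (r₁ r₂ : ℕ → V) : Prop :=
  ∃ N : ℕ, ∀ m n : ℕ, N ≤ m → N ≤ n → ¬ ReachAvoidE G F (r₁ m) (r₂ n)

/-- Accessibility: some `k ≥ 1` such that any two distinct ends can be separated by
deleting at most `k` edges. -/
def Accessible (G : SimpleGraph V) : Prop :=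
  ∃ k : ℕ, 1 ≤ k ∧ ∀ r₁ r₂ : ℕ → V, RayIn G r₁ → RayIn G r₂ → ¬ EndEquiv G r₁ r₂ →
    ∃ F : Set (Sym2 V), F.Finite ∧ F.ncard ≤ k ∧ SepEnds G F r₁ r₂

/-- `l`-quasi-action of a group on the vertex set of a graph. -/
def IsQAct {G₀ : Type*} [Group G₀] (G : SimpleGraph V) (l : ℝ) (φ : G₀ → V → V) : Prop :=
  (∀ g : G₀, IsQI G G l l (φ g)) ∧
  (∀ (g h : G₀) (x : V), (G.dist (φ (g * h) x) (φ g (φ h x)) : ℝ) ≤ l) ∧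
  (∀ g : G₀, IsQInv G l (φ g) (φ g⁻¹) ∧ IsQInv G l (φ g⁻¹) (φ g))

/-- `B`-cobounded quasi-action. -/
def Cobdd {G₀ : Type*} [Group G₀] (G : SimpleGraph V) (B : ℝ) (φ : G₀ → V → V) : Prop :=
  ∀ x y : V, ∃ g : G₀, (G.dist x (φ g y) : ℝ) ≤ B

/-- The diameter (in `ℕ`) of a vertex set. -/
noncomputable def setDiam (G : SimpleGraph V) (S : Set V) : ℕ :=
  sSup {d : ℕ | ∃ x ∈ S, ∃ y ∈ S, G.dist x y = d}

/-- 2-connected: connected, at least three vertices, and deleting any single vertex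
leaves it connected. -/
def TwoConnected (G : SimpleGraph V) : Prop :=
  G.Connected ∧ (∃ a b c : V, a ≠ b ∧ a ≠ c ∧ b ≠ c) ∧
    ∀ v : V, (G.induce {w : V | w ≠ v}).Connected

/-- Tree decomposition. -/
def IsTreeDecomp {VT : Type*} (X : SimpleGraph V) (T : SimpleGraph VT) (B : VT → Set V) :
    Prop :=
  T.IsTree ∧ (∀ x : V, ∃ u : VT, x ∈ B u) ∧
    ∀ u v w : VT, (∃ p : T.Walk u w, p.IsPath ∧ v ∈ p.support) → B u ∩ B w ⊆ B v

/-- Bounded adhesion. -/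
def BddAdhesion {VT : Type*} (T : SimpleGraph VT) (B : VT → Set V) : Prop :=
  ∃ N : ℕ, ∀ u w : VT, T.Adj u w → (B u ∩ B w).Finite ∧ (B u ∩ B w).ncard ≤ N

/-- Connected parts. -/
def ConnParts {VT : Type*} (X : SimpleGraph V) (B : VT → Set V) : Prop :=
  ∀ u : VT, (X.induce (B u)).Connected

/-- Replacing each bag by its closed `r`-neighbourhood. -/
def ballBag {VT : Type*} (X : SimpleGraph V) (B : VT → Set V) (r : ℕ) : VT → Set V :=
  fun u => {x : V | ∃ y ∈ B u, X.dist x y ≤ r}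

/-- A point of `G` which is either a vertex lying outside `B(S;R)` (encoded as a constant
sequence) or an end (encoded as a ray representing it). -/
def PtSeq (G : SimpleGraph V) (S : Set V) (R : ℝ) (a : ℕ → V) : Prop :=
  (∃ v : V, a = Function.const ℕ v ∧ ∀ s ∈ S, R < (G.dist v s : ℝ)) ∨ RayIn G a

/-- A subring of `𝓑G`: contains `∅`, and is closed under intersection and
symmetric difference. -/
def IsSubring (G : SimpleGraph V) (R : Set (Set V)) : Prop :=
  (∀ b ∈ R, MemBX G b) ∧ ∅ ∈ R ∧
    (∀ a ∈ R, ∀ b ∈ R, a ∩ b ∈ R) ∧ (∀ a ∈ R, ∀ b ∈ R, symmDiff a b ∈ R)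

/-- The subring generated by a family. -/
def genSubring (G : SimpleGraph V) (E : Set (Set V)) : Set (Set V) :=
  ⋂₀ {R : Set (Set V) | IsSubring G R ∧ E ⊆ R}

/-- Two vertex sets are nested. -/
def Nested (a b : Set V) : Prop :=
  a ∩ b = ∅ ∨ a ∩ bᶜ = ∅ ∨ aᶜ ∩ b = ∅ ∨ aᶜ ∩ bᶜ = ∅

/-- A nested family: closed under complementation and pairwise nested. -/
def NestedFam (E : Set (Set V)) : Prop :=
  (∀ b ∈ E, bᶜ ∈ E) ∧ ∀ a ∈ E, ∀ b ∈ E, Nested a b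

/-- A `G₀`-invariant family of vertex sets. -/
def GInvFam (G₀ : Type*) [Group G₀] [MulAction G₀ V] (E : Set (Set V)) : Prop :=
  ∀ g : G₀, ∀ b ∈ E, (fun x => g • x) '' b ∈ E

/-- A `G₀`-finite family of vertex sets: it meets only finitely many orbits. -/
def GFinFam (G₀ : Type*) [Group G₀] [MulAction G₀ V] (E : Set (Set V)) : Prop :=
  ∃ F : Set (Set V), F.Finite ∧ F ⊆ E ∧
    ∀ b ∈ E, ∃ g : G₀, ∃ c ∈ F, (fun x => g • x) '' c = b

/-- `g` stabilises the subgraph `L` setwise. -/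
def StabSub {G₀ : Type*} [Group G₀] [MulAction G₀ V] (G : SimpleGraph V) (g : G₀)
    (L : G.Subgraph) : Prop :=
  (∀ v : V, v ∈ L.verts ↔ g • v ∈ L.verts) ∧
    (∀ a b : V, L.Adj a b ↔ L.Adj (g • a) (g • b))

end Paper

/-!
Two inequivalent rays are separated by a finite set `S₀`, contained in a ball `B(x₀, D)`.
If some `z ∈ Z` were farther than `C = B + l(D + 4l)` from every boundary vertex of `Z`, then
`Z` would contain the ball `B(z, C)`. Coboundedness gives `g` with `φ_g x₀` near `z`. Far along
the two rays, the `φ_g`-images leave the finite set `Z`, so they are joined by a walk outside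
`Z`. Pulled back by `φ_{g⁻¹}`, this walk becomes a coarse path whose steps have length at most
`2l` and which stays farther than `2l` from `S₀`. Joining consecutive points by geodesics gives
a path between the tails of the rays that avoids `S₀`, which is a contradiction.
-/

namespace SimpleGraph

variable {V : Type*} {Γ : SimpleGraph V}

lemma Connected.dist_triangle_real (hc : Γ.Connected) (u v w : V) :
    (Γ.dist u w : ℝ) ≤ Γ.dist u v + Γ.dist v w := by
  exact_mod_cast hc.dist_triangle

lemma Walk.dist_le_of_mem_support_of_length_eq_dist {a b u : V} (p : Γ.Walk a b)
    (hp : p.length = Γ.dist a b) (hu : u ∈ p.support) : Γ.dist a u ≤ Γ.dist a b := by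
  classical
  exact (dist_le (p.takeUntil u hu)).trans ((p.length_takeUntil_le_length hu).trans hp.le)

lemma Connected.exists_boundary_vertex_dist_le (hc : Γ.Connected) {Z : Set V} {z v : V}
    (hz : z ∈ Z) (hv : v ∉ Z) :
    ∃ w ∈ Z, (∃ u, u ∉ Z ∧ Γ.Adj w u) ∧ Γ.dist z w ≤ Γ.dist z v := by
  obtain ⟨p, hp⟩ := hc.exists_walk_length_eq_dist z v
  obtain ⟨d, hd, hdZ, hdZ'⟩ := p.exists_boundary_dart Z hz hv
  exact ⟨d.fst, hdZ, ⟨d.snd, hdZ', d.adj⟩,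
    p.dist_le_of_mem_support_of_length_eq_dist hp (p.dart_fst_mem_support_of_mem_darts hd)⟩

end SimpleGraph

namespace Paper

variable {V : Type*} {Γ : SimpleGraph V}

lemma finite_setOf_dist_le (hc : Γ.Connected) (hlf : LocFin Γ) (n : ℕ) :
    ∀ x : V, {v | Γ.dist x v ≤ n}.Finite := by
  induction n with
  | zero =>
    intro x
    refine (Set.finite_singleton x).subset fun v hv => ?_
    exact ((hc.dist_eq_zero_iff).1 (Nat.le_zero.1 hv)).symm
  | succ n ih =>
    intro x
    refine (((hlf x).biUnion fun y _ => ih y).insert x).subset fun v hv => ?_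
    obtain ⟨p, hp⟩ := hc.exists_walk_length_eq_dist x v
    cases p with
    | nil => exact Set.mem_insert x _
    | @cons _ y _ hxy q =>
      refine Set.mem_insert_of_mem x (Set.mem_biUnion hxy ?_)
      have hq : q.length + 1 = Γ.dist x v := by simpa using hp
      exact (SimpleGraph.dist_le q).trans (by change Γ.dist x v ≤ n + 1 at hv; omega)

lemma eventually_lt_dist_of_injective (hc : Γ.Connected) (hlf : LocFin Γ) {r : ℕ → V}
    (hr : Function.Injective r) (x : V) (R : ℝ) :
    ∀ᶠ m in Filter.atTop, R < (Γ.dist x (r m) : ℝ) := by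
  obtain ⟨n, hn⟩ := exists_nat_gt R
  have hleave : ∀ᶠ m in Filter.atTop, r m ∉ {v | Γ.dist x v ≤ n} :=
    Nat.cofinite_eq_atTop ▸ hr.tendsto_cofinite
      (finite_setOf_dist_le hc hlf n x).compl_mem_cofinite
  filter_upwards [hleave] with m hm
  have : (n : ℝ) < Γ.dist x (r m) := by exact_mod_cast not_le.1 hm
  linarith

lemma ReachOut.symm {S : Set V} {a b : V} (h : ReachOut Γ S a b) : ReachOut Γ S b a := by
  obtain ⟨p, hp⟩ := h
  exact ⟨p.reverse, fun v hv => hp v (by simpa using hv)⟩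

lemma ReachOut.trans {S : Set V} {a b c : V} (hab : ReachOut Γ S a b)
    (hbc : ReachOut Γ S b c) : ReachOut Γ S a c := by
  obtain ⟨p, hp⟩ := hab
  obtain ⟨q, hq⟩ := hbc
  refine ⟨p.append q, fun v hv => ?_⟩
  rcases (SimpleGraph.Walk.mem_support_append_iff _ _).1 hv with hv | hv
  exacts [hp v hv, hq v hv]

lemma reachOut_of_dist_le (hc : Γ.Connected) {S : Set V} {a b : V} {c : ℝ}
    (hab : (Γ.dist a b : ℝ) ≤ c) (hS : ∀ s ∈ S, c < (Γ.dist a s : ℝ)) :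
    ReachOut Γ S a b := by
  obtain ⟨p, hp⟩ := hc.exists_walk_length_eq_dist a b
  refine ⟨p, fun u hu huS => (hS u huS).not_ge (le_trans ?_ hab)⟩
  exact_mod_cast p.dist_le_of_mem_support_of_length_eq_dist hp hu

/-- Consecutive images are joined by geodesics, which avoid `S` as they have length at most `c`. -/
lemma ReachOut.map (hc : Γ.Connected) {S T : Set V} {f : V → V} {c : ℝ} (hc0 : 0 ≤ c)
    (hstep : ∀ v w, Γ.Adj v w → v ∉ T → w ∉ T → (Γ.dist (f v) (f w) : ℝ) ≤ c)
    (hfar : ∀ v ∉ T, ∀ s ∈ S, c < (Γ.dist (f v) s : ℝ)) {a b : V} (h : ReachOut Γ T a b) :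
    ReachOut Γ S (f a) (f b) := by
  obtain ⟨p, hp⟩ := h
  induction p with
  | @nil x =>
    refine ⟨.nil, fun u hu huS => ?_⟩
    rw [SimpleGraph.Walk.support_nil, List.mem_singleton] at hu
    have := hfar x (hp x (by simp)) u huS
    rw [hu, SimpleGraph.dist_self, Nat.cast_zero] at this
    linarith
  | @cons u v w huv q ih =>
    have hu : u ∉ T := hp u (by simp)
    have hv : v ∉ T := hp v (by simp)
    exact (reachOut_of_dist_le hc (hstep u v huv hu hv) (hfar u hu)).trans
      (ih fun x hx => hp x (List.mem_cons_of_mem u hx))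

section QuasiAction

variable {G₀ : Type*} [Group G₀] {l : ℝ} {φ : G₀ → V → V}

lemma IsQAct.dist_div_sub_le (hqa : IsQAct Γ l φ) (g : G₀) (x y : V) :
    (Γ.dist x y : ℝ) / l - l ≤ Γ.dist (φ g x) (φ g y) :=
  ((hqa.1 g).1 x y).1

lemma IsQAct.dist_le_mul_add (hqa : IsQAct Γ l φ) (g : G₀) (x y : V) :
    (Γ.dist (φ g x) (φ g y) : ℝ) ≤ l * Γ.dist x y + l :=
  ((hqa.1 g).1 x y).2

lemma IsQAct.dist_inv_apply_le (hqa : IsQAct Γ l φ) (g : G₀) (x : V) :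
    (Γ.dist (φ g⁻¹ (φ g x)) x : ℝ) ≤ l :=
  (hqa.2.2 g).1 x

lemma IsQAct.dist_le_two_mul_of_adj (hqa : IsQAct Γ l φ) (g : G₀) {v w : V}
    (hvw : Γ.Adj v w) : (Γ.dist (φ g v) (φ g w) : ℝ) ≤ 2 * l := by
  have := hqa.dist_le_mul_add g v w
  rw [SimpleGraph.dist_eq_one_iff_adj.2 hvw, Nat.cast_one] at this
  linarith

lemma IsQAct.lt_dist_apply (hqa : IsQAct Γ l φ) (hl : 0 < l) (hc : Γ.Connected) {g : G₀}
    {x y z : V} {B R : ℝ} (hz : (Γ.dist z (φ g x) : ℝ) ≤ B)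
    (hy : l * (R + B + l) < Γ.dist x y) : R < (Γ.dist z (φ g y) : ℝ) := by
  have hdiv : R + B + l < (Γ.dist x y : ℝ) / l := by rwa [lt_div_iff₀ hl, mul_comm]
  have := hqa.dist_div_sub_le g x y
  have := hc.dist_triangle_real (φ g x) z (φ g y)
  rw [SimpleGraph.dist_comm] at hz
  linarith

lemma IsQAct.two_mul_lt_dist_inv_apply (hqa : IsQAct Γ l φ) (hl : 0 < l) (hc : Γ.Connected)
    {g : G₀} {x y z s : V} {B D : ℝ} (hz : (Γ.dist z (φ g x) : ℝ) ≤ B)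
    (hs : (Γ.dist x s : ℝ) ≤ D) (hy : B + l * (D + 4 * l) < Γ.dist z y) :
    2 * l < (Γ.dist (φ g⁻¹ y) s : ℝ) := by
  have hgx : l * (D + 4 * l) < Γ.dist (φ g x) y := by
    linarith [hc.dist_triangle_real z (φ g x) y]
  have hpull : D + 3 * l < (Γ.dist (φ g⁻¹ (φ g x)) (φ g⁻¹ y) : ℝ) :=
    hqa.lt_dist_apply hl hc (x := φ g x) (B := 0) (by simp) (by linarith)
  have hsy := hc.dist_triangle_real x s (φ g⁻¹ y)
  rw [SimpleGraph.dist_comm (u := s)] at hsy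
  linarith [hqa.dist_inv_apply_le g x, hc.dist_triangle_real (φ g⁻¹ (φ g x)) x (φ g⁻¹ y)]

lemma reachOut_of_ball_subset (hqa : IsQAct Γ l φ) (hl : 0 < l) (hc : Γ.Connected)
    {S₀ Z : Set V} {x₀ z : V} {g : G₀} {B D : ℝ} (hD : ∀ s ∈ S₀, (Γ.dist x₀ s : ℝ) ≤ D)
    (hg : (Γ.dist z (φ g x₀) : ℝ) ≤ B) (hZ : ∀ a b, a ∉ Z → b ∉ Z → ReachOut Γ Z a b)
    (hball : ∀ v ∉ Z, B + l * (D + 4 * l) < (Γ.dist z v : ℝ)) {a b : V}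
    (ha : D + l < (Γ.dist x₀ a : ℝ)) (hb : D + l < (Γ.dist x₀ b : ℝ))
    (haZ : φ g a ∉ Z) (hbZ : φ g b ∉ Z) : ReachOut Γ S₀ a b := by
  have hpull : ReachOut Γ S₀ (φ g⁻¹ (φ g a)) (φ g⁻¹ (φ g b)) :=
    (hZ _ _ haZ hbZ).map hc (by linarith)
      (fun v w hvw _ _ => hqa.dist_le_two_mul_of_adj g⁻¹ hvw)
      fun v hv s hs => hqa.two_mul_lt_dist_inv_apply hl hc hg (hD s hs) (hball v hv)
  have hback : ∀ y, D + l < (Γ.dist x₀ y : ℝ) → ReachOut Γ S₀ y (φ g⁻¹ (φ g y)) := by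
    refine fun y hy => reachOut_of_dist_le hc (c := l)
      (by rw [SimpleGraph.dist_comm]; exact hqa.dist_inv_apply_le g y) fun s hs => ?_
    have htri := hc.dist_triangle_real x₀ s y
    rw [SimpleGraph.dist_comm (u := s)] at htri
    linarith [hD s hs]
  exact (hback a ha).trans (hpull.trans (hback b hb).symm)

end QuasiAction

end Paper

open Paper in
theorem stmt3 {V G₀ : Type*} [Group G₀] (Γ : SimpleGraph V)
    (hc : Γ.Connected) (hlf : LocFin Γ)
    (l B : ℝ) (hl : 1 ≤ l) (hB : 0 ≤ B)
    (φ : G₀ → V → V) (hqa : IsQAct Γ l φ) (hcb : Cobdd Γ B φ)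
    (hends : ∃ r₁ r₂ : ℕ → V, RayIn Γ r₁ ∧ RayIn Γ r₂ ∧ ¬ EndEquiv Γ r₁ r₂) :
    ∃ C : ℝ, 1 ≤ C ∧
      ∀ Z : Set V, Z.Finite →
        (∀ a b : V, a ∉ Z → b ∉ Z → ReachOut Γ Z a b) →
        ∀ z ∈ Z, ∃ w ∈ Z, (∃ u : V, u ∉ Z ∧ Γ.Adj w u) ∧ (Γ.dist z w : ℝ) ≤ C := by
  obtain ⟨r₁, r₂, hr₁, hr₂, hne⟩ := hends
  obtain ⟨S₀, hS₀, hsep⟩ : ∃ S₀ : Set V, S₀.Finite ∧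
      ∀ N, ∃ m n, N ≤ m ∧ N ≤ n ∧ ¬ ReachOut Γ S₀ (r₁ m) (r₂ n) := by
    simpa [EndEquiv] using hne
  set x₀ := r₁ 0
  obtain ⟨D, hD⟩ := (hS₀.image (Γ.dist x₀)).bddAbove
  refine ⟨B + l * (D + 4 * l), by nlinarith [D.cast_nonneg (α := ℝ)], ?_⟩
  intro Z hZ hZconn z hz
  by_contra! hnear
  have hball : ∀ v ∉ Z, B + l * (D + 4 * l) < (Γ.dist z v : ℝ) := fun v hv => by
    obtain ⟨w, hw, hwb, hwv⟩ := hc.exists_boundary_vertex_dist_le hz hv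
    exact (hnear w hw hwb).trans_le (by exact_mod_cast hwv)
  obtain ⟨g, hg⟩ := hcb z x₀
  obtain ⟨E, hE⟩ := (hZ.image (Γ.dist z)).bddAbove
  have hout : ∀ y, l * (E + B + l) < (Γ.dist x₀ y : ℝ) → φ g y ∉ Z := fun y hy hyZ =>
    (hqa.lt_dist_apply (by linarith) hc hg hy).not_ge (by exact_mod_cast hE ⟨_, hyZ, rfl⟩)
  obtain ⟨N, hN⟩ := Filter.eventually_atTop.1
    ((eventually_lt_dist_of_injective hc hlf hr₁.1 x₀ (max (D + l) (l * (E + B + l)))).and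
      (eventually_lt_dist_of_injective hc hlf hr₂.1 x₀ (max (D + l) (l * (E + B + l)))))
  obtain ⟨m, n, hm, hn, hmn⟩ := hsep N
  obtain ⟨hm₁, hm₂⟩ := max_lt_iff.1 (hN m hm).1
  obtain ⟨hn₁, hn₂⟩ := max_lt_iff.1 (hN n hn).2
  exact hmn (reachOut_of_ball_subset hqa (by linarith) hc
    (fun s hs => by exact_mod_cast hD ⟨s, hs, rfl⟩) hg hZconn hball hm₁ hn₁
    (hout _ hm₂) (hout _ hn₂))
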